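/- Let Φ̂ ∈ Π_{p,T} and assume additionally that the lower-right T×T block Φ̂₂₂ of Φ̂ is negative definite (Φ̂₂₂ ≺ 0). Then Σ = Σ̄: a pair (A,B) is consistent with the data under data perturbation if and only if [I_n, A, B] N [I_n, A, B]ᵀ ⪰ 0 with N = [E, 𝐗] Φ̂ [E, 𝐗]ᵀ. -/

import Mathlib

/-!
With `F = S E` and `G = S 𝐗` we have `S N Sᵀ = [F, G] Φ̂ [F, G]ᵀ`. If `G = F Δ̂`, then
`[F, G] = F [I, Δ̂]`, and the QMI for `Δ̂` is carried over by congruence. Conversely, as `Φ̂₂₂` is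
invertible, completing the square gives `[F, G] Φ̂ [F, G]ᵀ = F Q Fᵀ − H R Hᵀ` with
`Q = Φ̂|Φ̂₂₂ ⪰ 0`, `R = −Φ̂₂₂ ≻ 0` and `H = G + F Φ̂₁₂ Φ̂₂₂⁻¹`. Douglas' lemma (if `‖g x‖ ≤ ‖f x‖`
for all `x`, then `g = C f` for a contraction `C`, defined on the range of `f` and zero on its
orthogonal complement) turns `F Q Fᵀ ⪰ H R Hᵀ` into some `Y` with `F Y = H` and `Y R Yᵀ ⪯ Q`,
and `Δ̂ = Y − Φ̂₁₂ Φ̂₂₂⁻¹` is the required perturbation.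
-/

open Matrix

/-- The four Moore–Penrose equations characterizing the pseudoinverse. -/
def IsMoorePenroseInv {m n : Type*} [Fintype m] [Fintype n]
    (A : Matrix m n ℝ) (Ad : Matrix n m ℝ) : Prop :=
  A * Ad * A = A ∧ Ad * A * Ad = Ad ∧ (A * Ad)ᵀ = A * Ad ∧ (Ad * A)ᵀ = Ad * A

/-- The stacked data matrix `𝐗 = [X₊ᵀ, −X₋ᵀ, −U₋ᵀ]ᵀ`. -/
def dataX {n m T : ℕ} (Xp Xm : Matrix (Fin n) (Fin T) ℝ) (Um : Matrix (Fin m) (Fin T) ℝ) :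
    Matrix (Fin n ⊕ (Fin n ⊕ Fin m)) (Fin T) ℝ :=
  fromRows Xp (fromRows (-Xm) (-Um))

/-- The row block `S = [I_n, A, B]`. -/
def rowS {n m : ℕ} (A : Matrix (Fin n) (Fin n) ℝ) (B : Matrix (Fin n) (Fin m) ℝ) :
    Matrix (Fin n) (Fin n ⊕ (Fin n ⊕ Fin m)) ℝ :=
  fromCols 1 (fromCols A B)

/-- `(A,B)` is consistent with the data under data perturbation: there exists `Δ̂`
with `S𝐗 = S E Δ̂` satisfying the QMI for `Φ̂`. -/
def ConsistentDP {n m p T : ℕ} (Xp Xm : Matrix (Fin n) (Fin T) ℝ) (Um : Matrix (Fin m) (Fin T) ℝ)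
    (E : Matrix (Fin n ⊕ (Fin n ⊕ Fin m)) (Fin p) ℝ)
    (Φ : Matrix (Fin p ⊕ Fin T) (Fin p ⊕ Fin T) ℝ)
    (A : Matrix (Fin n) (Fin n) ℝ) (B : Matrix (Fin n) (Fin m) ℝ) : Prop :=
  ∃ Δ : Matrix (Fin p) (Fin T) ℝ,
    rowS A B * dataX Xp Xm Um = rowS A B * E * Δ ∧
    ((fromRows (1 : Matrix (Fin p) (Fin p) ℝ) Δᵀ)ᵀ * Φ * fromRows (1 : Matrix (Fin p) (Fin p) ℝ) Δᵀ).PosSemidef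

/-- The matrix `N = [E, 𝐗] Φ̂ [E, 𝐗]ᵀ`. -/
def matN {n m p T : ℕ} (Xp Xm : Matrix (Fin n) (Fin T) ℝ) (Um : Matrix (Fin m) (Fin T) ℝ)
    (E : Matrix (Fin n ⊕ (Fin n ⊕ Fin m)) (Fin p) ℝ)
    (Φ : Matrix (Fin p ⊕ Fin T) (Fin p ⊕ Fin T) ℝ) :
    Matrix (Fin n ⊕ (Fin n ⊕ Fin m)) (Fin n ⊕ (Fin n ⊕ Fin m)) ℝ :=
  fromCols E (dataX Xp Xm Um) * Φ * (fromCols E (dataX Xp Xm Um))ᵀ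

theorem LinearMap.exists_comp_eq_of_norm_le {𝕜 E F G : Type*} [RCLike 𝕜] [AddCommGroup E]
    [Module 𝕜 E] [NormedAddCommGroup F] [InnerProductSpace 𝕜 F] [FiniteDimensional 𝕜 F]
    [NormedAddCommGroup G] [NormedSpace 𝕜 G] {f : E →ₗ[𝕜] F} {g : E →ₗ[𝕜] G}
    (h : ∀ x, ‖g x‖ ≤ ‖f x‖) :
    ∃ C : F →ₗ[𝕜] G, C ∘ₗ f = g ∧ ∀ v, ‖C v‖ ≤ ‖v‖ := by
  obtain ⟨s, hs⟩ := f.rangeRestrict.exists_rightInverse_of_surjective f.range_rangeRestrict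
  have hfs (k) : f (s k) = k := congrArg Subtype.val (LinearMap.congr_fun hs k)
  let P := (LinearMap.range f).orthogonalProjectionOnto
  refine ⟨g ∘ₗ s ∘ₗ P.toLinearMap, LinearMap.ext fun x => ?_, fun v => ?_⟩
  · have hP : P (f x) = f.rangeRestrict x :=
      Submodule.orthogonalProjectionOnto_mem_subspace_eq_self (f.rangeRestrict x)
    -- `s (f x) - x ∈ ker f ⊆ ker g`
    have hg : g (s (f.rangeRestrict x) - x) = 0 := by
      simpa [hfs] using h (s (f.rangeRestrict x) - x)
    simpa [hP, sub_eq_zero] using hg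
  · calc ‖g (s (P v))‖ ≤ ‖f (s (P v))‖ := h _
      _ = ‖P v‖ := by rw [hfs]; rfl
      _ ≤ ‖v‖ := Submodule.norm_orthogonalProjectionOnto_apply_le _ v

namespace Matrix

section Douglas

variable {m n p : Type*} [Fintype m] [Fintype n] [Fintype p] [DecidableEq m]

theorem norm_toEuclideanLin_sq (M : Matrix n m ℝ) (x : EuclideanSpace ℝ m) :
    ‖toEuclideanLin M x‖ ^ 2 = x.ofLp ⬝ᵥ (Mᵀ * M) *ᵥ x.ofLp := by
  rw [← real_inner_self_eq_norm_sq, EuclideanSpace.inner_eq_star_dotProduct, ← mulVec_mulVec,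
    dotProduct_mulVec, vecMul_transpose]
  simp [toLpLin_apply]

theorem posSemidef_mul_transpose_sub_iff (A : Matrix m n ℝ) (B : Matrix m p ℝ) :
    (A * Aᵀ - B * Bᵀ).PosSemidef ↔
      ∀ x, ‖toEuclideanLin Bᵀ x‖ ≤ ‖toEuclideanLin Aᵀ x‖ := by
  have hsymm : (A * Aᵀ - B * Bᵀ).IsHermitian := by
    simp [IsHermitian, transpose_sub, transpose_mul]
  have hquad (x : EuclideanSpace ℝ m) :
      ‖toEuclideanLin Bᵀ x‖ ≤ ‖toEuclideanLin Aᵀ x‖ ↔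
        0 ≤ x.ofLp ⬝ᵥ (A * Aᵀ - B * Bᵀ) *ᵥ x.ofLp := by
    rw [← sq_le_sq₀ (norm_nonneg _) (norm_nonneg _), norm_toEuclideanLin_sq,
      norm_toEuclideanLin_sq, transpose_transpose, transpose_transpose, sub_mulVec,
      dotProduct_sub, sub_nonneg]
  simp only [posSemidef_iff_dotProduct_mulVec, hsymm, true_and, star_trivial, hquad]
  exact ⟨fun h x => h x.ofLp, fun h x => h (WithLp.toLp 2 x)⟩

variable [DecidableEq n]

theorem exists_mul_eq_of_posSemidef_mul_transpose_sub {A : Matrix m n ℝ} {B : Matrix m p ℝ}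
    (h : (A * Aᵀ - B * Bᵀ).PosSemidef) :
    ∃ Z : Matrix n p ℝ, A * Z = B ∧ (1 - Z * Zᵀ).PosSemidef := by
  obtain ⟨C, hCA, hC⟩ :=
    LinearMap.exists_comp_eq_of_norm_le ((posSemidef_mul_transpose_sub_iff A B).mp h)
  refine ⟨(toEuclideanLin.symm C)ᵀ, ?_, ?_⟩
  · rw [← transpose_transpose B, ← transpose_transpose A, ← transpose_mul, transpose_inj]
    apply toEuclideanLin.injective
    rw [toLpLin_mul_same, LinearEquiv.apply_symm_apply, hCA]
  · simpa using
      (posSemidef_mul_transpose_sub_iff (1 : Matrix n n ℝ) (toEuclideanLin.symm C)ᵀ).mpr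
        (by simpa using hC)

open scoped MatrixOrder in
theorem exists_mul_eq_of_posSemidef_mul_mul_transpose_sub [DecidableEq p] {Q : Matrix n n ℝ}
    {R : Matrix p p ℝ} (hQ : Q.PosSemidef) (hR : R.PosDef) {F : Matrix m n ℝ} {H : Matrix m p ℝ}
    (h : (F * Q * Fᵀ - H * R * Hᵀ).PosSemidef) :
    ∃ Y : Matrix n p ℝ, F * Y = H ∧ (Q - Y * R * Yᵀ).PosSemidef := by
  obtain ⟨M, rfl⟩ := CStarAlgebra.nonneg_iff_eq_star_mul_self.mp hQ.nonneg
  obtain ⟨N, hN, rfl⟩ :=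
    CStarAlgebra.isStrictlyPositive_iff_eq_star_mul_self.mp hR.isStrictlyPositive
  simp only [star_eq_conjTranspose, conjTranspose_eq_transpose_of_trivial] at h ⊢
  have hNd : IsUnit N.det := (isUnit_iff_isUnit_det N).mp hN
  have hNt : IsUnit Nᵀ.det := by rwa [det_transpose]
  obtain ⟨Z, hZ, hZZ⟩ := exists_mul_eq_of_posSemidef_mul_transpose_sub (A := F * Mᵀ)
    (B := H * Nᵀ) (by simpa only [transpose_mul, transpose_transpose, Matrix.mul_assoc] using h)
  refine ⟨Mᵀ * Z * Nᵀ⁻¹, ?_, ?_⟩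
  · rw [← Matrix.mul_assoc, ← Matrix.mul_assoc, hZ, mul_nonsing_inv_cancel_right _ _ hNt]
  · have hcongr : Mᵀ * M - Mᵀ * Z * Nᵀ⁻¹ * (Nᵀ * N) * (Mᵀ * Z * Nᵀ⁻¹)ᵀ =
        Mᵀ * (1 - Z * Zᵀ) * M := by
      rw [transpose_mul, transpose_mul, transpose_nonsing_inv, transpose_transpose,
        transpose_transpose]
      simp only [Matrix.mul_assoc, nonsing_inv_mul_cancel_left _ _ hNt,
        mul_nonsing_inv_cancel_left _ _ hNd, Matrix.sub_mul, Matrix.mul_sub, Matrix.one_mul]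
    rw [hcongr]
    simpa using hZZ.conjTranspose_mul_mul_same M

end Douglas

theorem fromCols_mul_fromBlocks_mul_transpose {R J p t : Type*} [CommRing R] [Fintype p]
    [Fintype t] [DecidableEq t] (P : Matrix p p R) (K : Matrix p t R) {D : Matrix t t R}
    (hD : D.IsSymm) (hDdet : IsUnit D.det) (X : Matrix J p R) (Y : Matrix J t R) :
    fromCols X Y * fromBlocks P K Kᵀ D * (fromCols X Y)ᵀ =
      X * (P - K * D⁻¹ * Kᵀ) * Xᵀ + (Y + X * K * D⁻¹) * D * (Y + X * K * D⁻¹)ᵀ := by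
  have hDinv : D⁻¹ᵀ = D⁻¹ := by rw [transpose_nonsing_inv, hD.eq]
  rw [fromCols_mul_fromBlocks, transpose_fromCols, fromCols_mul_fromRows]
  simp only [transpose_add, transpose_mul, hDinv, Matrix.mul_add, Matrix.add_mul,
    Matrix.mul_sub, Matrix.sub_mul, Matrix.mul_assoc, nonsing_inv_mul_cancel_left _ _ hDdet,
    mul_nonsing_inv_cancel_left _ _ hDdet]
  abel

theorem exists_eq_mul_and_posSemidef_iff {J p t : Type*} [Fintype J] [Fintype p] [Fintype t]
    [DecidableEq J] [DecidableEq p] [DecidableEq t] {P : Matrix p p ℝ} {K : Matrix p t ℝ}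
    {D : Matrix t t ℝ} (hD : (-D).PosDef) (hSchur : (P - K * D⁻¹ * Kᵀ).PosSemidef)
    (F : Matrix J p ℝ) (G : Matrix J t ℝ) :
    (∃ Δ : Matrix p t ℝ, G = F * Δ ∧
      (fromCols (1 : Matrix p p ℝ) Δ * fromBlocks P K Kᵀ D *
        (fromCols (1 : Matrix p p ℝ) Δ)ᵀ).PosSemidef) ↔
      (fromCols F G * fromBlocks P K Kᵀ D * (fromCols F G)ᵀ).PosSemidef := by
  constructor
  · rintro ⟨Δ, rfl, hΔ⟩
    have hF : fromCols F (F * Δ) = F * fromCols (1 : Matrix p p ℝ) Δ := by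
      rw [mul_fromCols, Matrix.mul_one]
    rw [hF, transpose_mul]
    simpa only [Matrix.mul_assoc, conjTranspose_eq_transpose_of_trivial] using
      hΔ.mul_mul_conjTranspose_same F
  · intro h
    have hDsymm : D.IsSymm := by simpa using hD.isHermitian.transpose.neg
    have hDdet : IsUnit D.det := (isUnit_iff_isUnit_det D).mp (by simpa using hD.isUnit.neg)
    rw [fromCols_mul_fromBlocks_mul_transpose P K hDsymm hDdet, ← sub_neg_eq_add,
      ← Matrix.neg_mul, ← Matrix.mul_neg] at h
    obtain ⟨Y, hY, hQ⟩ := exists_mul_eq_of_posSemidef_mul_mul_transpose_sub hSchur hD h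
    refine ⟨Y - K * D⁻¹, ?_, ?_⟩
    · rw [Matrix.mul_sub, hY, ← Matrix.mul_assoc, add_sub_cancel_right]
    · rw [fromCols_mul_fromBlocks_mul_transpose P K hDsymm hDdet]
      simpa only [Matrix.one_mul, transpose_one, Matrix.mul_one, sub_add_cancel, Matrix.mul_neg,
        Matrix.neg_mul, sub_neg_eq_add] using hQ

end Matrix

theorem IsMoorePenroseInv.eq_nonsing_inv {n : Type*} [Fintype n] [DecidableEq n]
    {A Ad : Matrix n n ℝ} (h : IsMoorePenroseInv A Ad) (hA : IsUnit A.det) : Ad = A⁻¹ := by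
  calc Ad = A⁻¹ * (A * Ad * A) * A⁻¹ := by
        simp only [Matrix.mul_assoc, mul_nonsing_inv _ hA, Matrix.mul_one,
          nonsing_inv_mul_cancel_left _ _ hA]
    _ = A⁻¹ := by
        rw [h.1, Matrix.mul_assoc, mul_nonsing_inv _ hA, Matrix.mul_one]

section DataPerturbation

variable {n m p T : ℕ} (Xp Xm : Matrix (Fin n) (Fin T) ℝ) (Um : Matrix (Fin m) (Fin T) ℝ)
  (E : Matrix (Fin n ⊕ (Fin n ⊕ Fin m)) (Fin p) ℝ) (Φ : Matrix (Fin p ⊕ Fin T) (Fin p ⊕ Fin T) ℝ)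
  (A : Matrix (Fin n) (Fin n) ℝ) (B : Matrix (Fin n) (Fin m) ℝ)

theorem consistentDP_iff : ConsistentDP Xp Xm Um E Φ A B ↔
    ∃ Δ, rowS A B * dataX Xp Xm Um = rowS A B * E * Δ ∧
      (fromCols (1 : Matrix (Fin p) (Fin p) ℝ) Δ * Φ *
        (fromCols (1 : Matrix (Fin p) (Fin p) ℝ) Δ)ᵀ).PosSemidef := by
  have hrows (Δ : Matrix (Fin p) (Fin T) ℝ) :
      fromRows (1 : Matrix (Fin p) (Fin p) ℝ) Δᵀ = (fromCols 1 Δ)ᵀ := by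
    rw [transpose_fromCols, transpose_one]
  simp only [ConsistentDP, hrows, transpose_transpose]

theorem rowS_mul_matN_mul_transpose : rowS A B * matN Xp Xm Um E Φ * (rowS A B)ᵀ =
    fromCols (rowS A B * E) (rowS A B * dataX Xp Xm Um) * Φ *
      (fromCols (rowS A B * E) (rowS A B * dataX Xp Xm Um))ᵀ := by
  simp only [matN, ← mul_fromCols, transpose_mul, Matrix.mul_assoc]

end DataPerturbation

theorem Sigma_eq_SigmaBar_of_Phi22_negdef_general (n m p T : ℕ)
    (Xp Xm : Matrix (Fin n) (Fin T) ℝ) (Um : Matrix (Fin m) (Fin T) ℝ)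
    (E : Matrix (Fin n ⊕ (Fin n ⊕ Fin m)) (Fin p) ℝ)
    (Φ : Matrix (Fin p ⊕ Fin T) (Fin p ⊕ Fin T) ℝ) (hΦ : Φ.IsSymm)
    -- Φ̂ ∈ Π_{p,T}:
    (Φ22d : Matrix (Fin T) (Fin T) ℝ)
    (hΦMP : IsMoorePenroseInv Φ.toBlocks₂₂ Φ22d)
    (hΦSchur : (Φ.toBlocks₁₁ - Φ.toBlocks₁₂ * Φ22d * Φ.toBlocks₂₁).PosSemidef)
    -- Φ̂₂₂ ≺ 0:
    (hΦ22neg : (-(Φ.toBlocks₂₂)).PosDef)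
    (A : Matrix (Fin n) (Fin n) ℝ) (B : Matrix (Fin n) (Fin m) ℝ) :
    ConsistentDP Xp Xm Um E Φ A B ↔
    (rowS A B * matN Xp Xm Um E Φ * (rowS A B)ᵀ).PosSemidef := by
  have h21 : Φ.toBlocks₁₂ᵀ = Φ.toBlocks₂₁ :=
    (isSymm_fromBlocks_iff.mp ((fromBlocks_toBlocks Φ).symm ▸ hΦ)).2.1
  have hΦblocks : Φ = fromBlocks Φ.toBlocks₁₁ Φ.toBlocks₁₂ Φ.toBlocks₁₂ᵀ Φ.toBlocks₂₂ := by
    rw [h21, fromBlocks_toBlocks]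
  have hdet : IsUnit Φ.toBlocks₂₂.det :=
    (isUnit_iff_isUnit_det _).mp (by simpa using hΦ22neg.isUnit.neg)
  rw [hΦMP.eq_nonsing_inv hdet, ← h21] at hΦSchur
  rw [consistentDP_iff, rowS_mul_matN_mul_transpose, hΦblocks]
  exact exists_eq_mul_and_posSemidef_iff hΦ22neg hΦSchur _ _

/-- Theorem 1, equality part under Φ̂₂₂ ≺ 0: Σ = Σ̄. -/
theorem Sigma_eq_SigmaBar_of_Phi22_negdef (n m p T : ℕ)
    (Xp Xm : Matrix (Fin n) (Fin T) ℝ) (Um : Matrix (Fin m) (Fin T) ℝ)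
    (E : Matrix (Fin n ⊕ (Fin n ⊕ Fin m)) (Fin p) ℝ)
    (Φ : Matrix (Fin p ⊕ Fin T) (Fin p ⊕ Fin T) ℝ) (hΦ : Φ.IsSymm)
    -- Φ̂ ∈ Π_{p,T}:
    (Φ22d : Matrix (Fin T) (Fin T) ℝ)
    (hΦMP : IsMoorePenroseInv Φ.toBlocks₂₂ Φ22d)
    (hΦ22 : (-(Φ.toBlocks₂₂)).PosSemidef)
    (hΦker : ∀ x : Fin T → ℝ, Φ.toBlocks₂₂ *ᵥ x = 0 → Φ.toBlocks₁₂ *ᵥ x = 0)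
    (hΦSchur : (Φ.toBlocks₁₁ - Φ.toBlocks₁₂ * Φ22d * Φ.toBlocks₂₁).PosSemidef)
    -- Φ̂₂₂ ≺ 0:
    (hΦ22neg : (-(Φ.toBlocks₂₂)).PosDef)
    (A : Matrix (Fin n) (Fin n) ℝ) (B : Matrix (Fin n) (Fin m) ℝ) :
    ConsistentDP Xp Xm Um E Φ A B ↔
    (rowS A B * matN Xp Xm Um E Φ * (rowS A B)ᵀ).PosSemidef :=
  Sigma_eq_SigmaBar_of_Phi22_negdef_general n m p T Xp Xm Um E Φ hΦ Φ22d hΦMP hΦSchur hΦ22neg A B
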